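/- arXiv:2005.06183 — 5 statements merged into one kernel-verified Lean document; each statement's English description precedes it below -/
import Mathlib

section
/- Let G be a countable group with a left-invariant linear order, and let Ψ : G → ℚ ∩ J be an order-preserving bijection onto the rationals of an interval J. Define, for each g ∈ G, a map ρ(g) on ℚ ∩ J by ρ(g)(Ψ(h)) = Ψ(gh). Then ρ is an injective group homomorphism from G into the group of order-preserving bijections of ℚ ∩ J. -/
/-!
Transporting the left regular action of `G` on itself along the bijection `Ψ` gives
`ρ g = Ψ ∘ (g * ·) ∘ Ψ⁻¹`. This is a faithful action by permutations, and since `Ψ` is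
order-preserving and left multiplication is strictly monotone, each `ρ g` is strictly monotone.
-/

namespace Equiv

variable {G X : Type*} [Group G]

def leftRegularPerm (Ψ : G ≃ X) : G →* Perm X :=
  (permCongrHom Ψ).toMonoidHom.comp (MulAction.toPermHom G G)

theorem leftRegularPerm_apply (Ψ : G ≃ X) (g : G) (x : X) :
    Ψ.leftRegularPerm g x = Ψ (g * Ψ.symm x) :=
  rfl

theorem leftRegularPerm_injective (Ψ : G ≃ X) : Function.Injective Ψ.leftRegularPerm :=
  (permCongrHom Ψ).injective.comp MulAction.toPerm_injective

theorem eq_leftRegularPerm {Ψ : G ≃ X} {ρ : G → X → X} (hρ : ∀ g h : G, ρ g (Ψ h) = Ψ (g * h)) :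
    ρ = fun g => ⇑(Ψ.leftRegularPerm g) := by
  funext g x
  rw [← Ψ.apply_symm_apply x, hρ, leftRegularPerm_apply, Ψ.symm_apply_apply]

theorem strictMono_leftRegularPerm [Preorder G] [Preorder X] (Ψ : G ≃ X)
    (hleft : ∀ f g h : G, g < h → f * g < f * h) (hΨ : ∀ a b : G, a < b ↔ Ψ a < Ψ b) (g : G) :
    StrictMono (Ψ.leftRegularPerm g) := by
  have hΨ_symm : StrictMono Ψ.symm := fun x y hxy => by
    rwa [hΨ, Ψ.apply_symm_apply, Ψ.apply_symm_apply]
  exact fun x y hxy => (hΨ _ _).1 (hleft g _ _ (hΨ_symm hxy))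

end Equiv

theorem stmt5_general {G : Type*} [Group G] [LinearOrder G]
    (hleft : ∀ f g h : G, g < h → f * g < f * h)
    (J : Set ℚ) (Ψ : G ≃ J) (hΨ : ∀ a b : G, a < b ↔ (Ψ a : ℚ) < (Ψ b : ℚ))
    (ρ : G → J → J) (hρ : ∀ g h : G, ρ g (Ψ h) = Ψ (g * h)) :
    (∀ g : G, Function.Bijective (ρ g)) ∧
    (∀ g : G, StrictMono (ρ g)) ∧
    (∀ g g' : G, ∀ x : J, ρ (g * g') x = ρ g (ρ g' x)) ∧
    Function.Injective ρ := by
  obtain rfl := Equiv.eq_leftRegularPerm hρ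
  refine ⟨fun g => (Ψ.leftRegularPerm g).bijective,
    Ψ.strictMono_leftRegularPerm hleft hΨ,
    fun g g' x => by simp only [map_mul, Equiv.Perm.mul_apply], ?_⟩
  exact DFunLike.coe_injective.comp Ψ.leftRegularPerm_injective

theorem stmt5 {G : Type*} [Group G] [Countable G] [LinearOrder G]
    (hleft : ∀ f g h : G, g < h → f * g < f * h)
    (J : Set ℚ) (Ψ : G ≃ J) (hΨ : ∀ a b : G, a < b ↔ (Ψ a : ℚ) < (Ψ b : ℚ))
    (ρ : G → J → J) (hρ : ∀ g h : G, ρ g (Ψ h) = Ψ (g * h)) :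
    (∀ g : G, Function.Bijective (ρ g)) ∧
    (∀ g : G, StrictMono (ρ g)) ∧
    (∀ g g' : G, ∀ x : J, ρ (g * g') x = ρ g (ρ g' x)) ∧
    Function.Injective ρ :=
  stmt5_general hleft J Ψ hΨ ρ hρ
end

section
/- Let H be a group acting faithfully on a set Y, let N be a normal subgroup of H, and suppose there exist a nontrivial g ∈ N and a nonempty subset U ⊆ Y with g(U) ∩ U = ∅. Then the commutator subgroup of the rigid stabilizer of U is contained in N. -/
/-- The rigid stabilizer of a subset `U` of `Y`: the subgroup of elements
moving only points of `U`. -/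
def rigidStabilizer (H : Type*) {Y : Type*} [Group H] [MulAction H Y]
    (U : Set Y) : Subgroup H where
  carrier := {h : H | ∀ y : Y, y ∉ U → h • y = y}
  one_mem' := fun y _ => one_smul H y
  mul_mem' := by
    intro a b ha hb y hy
    rw [mul_smul, hb y hy, ha y hy]
  inv_mem' := by
    intro a ha y hy
    rw [inv_smul_eq_iff, ha y hy]

/-!
An element supported on `U` commutes with every element supported on the disjoint set `g • U`,
in particular with `g * b⁻¹ * g⁻¹` for `b` supported on `U`. Hence for `a, b` supported on `U`,
`⁅a, b⁆ = ⁅a, b * (g * b⁻¹ * g⁻¹)⁆ = ⁅a, ⁅b, g⁆⁆`, which lies in `N` as soon as `g` does.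
-/

open scoped Pointwise commutatorElement

section RigidStabilizer

variable {H Y : Type*} [Group H] [MulAction H Y] {U V : Set Y} {h : H}

theorem smul_mem_iff_of_mem_rigidStabilizer (hh : h ∈ rigidStabilizer H U) {y : Y} :
    h • y ∈ U ↔ y ∈ U := by
  refine ⟨fun hhy => ?_, fun hy => ?_⟩
  · by_contra hy
    exact hy (hh y hy ▸ hhy)
  · by_contra hhy
    have hfix : h⁻¹ • h • y = h • y := inv_mem hh _ hhy
    rw [inv_smul_smul] at hfix
    exact hhy (hfix ▸ hy)

theorem conj_mem_rigidStabilizer_smul (g : H) (hh : h ∈ rigidStabilizer H U) :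
    g * h * g⁻¹ ∈ rigidStabilizer H (g • U) := by
  intro y hy
  rw [Set.mem_smul_set_iff_inv_smul_mem] at hy
  rw [mul_smul, mul_smul, hh _ hy, smul_inv_smul]

theorem commute_of_mem_rigidStabilizer_of_disjoint [FaithfulSMul H Y] (hUV : Disjoint U V)
    {a b : H} (ha : a ∈ rigidStabilizer H U) (hb : b ∈ rigidStabilizer H V) : Commute a b := by
  refine eq_of_smul_eq_smul (α := Y) fun y => ?_
  rw [mul_smul, mul_smul]
  by_cases hyU : y ∈ U
  · have hay : a • y ∉ V := Set.disjoint_left.1 hUV ((smul_mem_iff_of_mem_rigidStabilizer ha).2 hyU)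
    rw [hb y (Set.disjoint_left.1 hUV hyU), hb _ hay]
  · have hby : b • y ∉ U := by
      by_cases hyV : y ∈ V
      · exact Set.disjoint_right.1 hUV ((smul_mem_iff_of_mem_rigidStabilizer hb).2 hyV)
      · rwa [hb y hyV]
    rw [ha y hyU, ha _ hby]

end RigidStabilizer

theorem Subgroup.Normal.commutatorElement_mem_right {G : Type*} [Group G] {N : Subgroup G}
    (hN : N.Normal) (a : G) {n : G} (hn : n ∈ N) : ⁅a, n⁆ ∈ N :=
  N.mul_mem (hN.conj_mem n hn a) (N.inv_mem hn)

theorem stmt9_general {H Y : Type*} [Group H] [MulAction H Y] [FaithfulSMul H Y]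
    (N : Subgroup H) [N.Normal] (g : H) (hg : g ∈ N)
    (U : Set Y) (hgU : ∀ y ∈ U, g • y ∉ U) :
    ⁅rigidStabilizer H U, rigidStabilizer H U⁆ ≤ N := by
  have hdisj : Disjoint U (g • U) := Set.disjoint_left.2 fun y hy hgy => by
    rw [Set.mem_smul_set_iff_inv_smul_mem] at hgy
    exact (smul_inv_smul g y ▸ hgU _ hgy) hy
  rw [Subgroup.commutator_le]
  intro a ha b hb
  have hcomm : ⁅a, g * b⁻¹ * g⁻¹⁆ = 1 := commutatorElement_eq_one_iff_commute.2 <|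
    commute_of_mem_rigidStabilizer_of_disjoint hdisj ha <|
      conj_mem_rigidStabilizer_smul g (inv_mem hb)
  have hab : ⁅a, b⁆ = ⁅a, ⁅b, g⁆⁆ := by
    have hbg : ⁅b, g⁆ = b * (g * b⁻¹ * g⁻¹) := by simp only [commutatorElement_def, mul_assoc]
    rw [hbg, commutatorElement_mul_right_eq_mul_conj, hcomm, mul_one, mul_inv_cancel_right]
  rw [hab]
  exact ‹N.Normal›.commutatorElement_mem_right a (‹N.Normal›.commutatorElement_mem_right b hg)

theorem stmt9 {H Y : Type*} [Group H] [MulAction H Y] [FaithfulSMul H Y]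
    (N : Subgroup H) [N.Normal] (g : H) (hg : g ∈ N) (hg1 : g ≠ 1)
    (U : Set Y) (hU : U.Nonempty) (hgU : ∀ y ∈ U, g • y ∉ U) :
    ⁅rigidStabilizer H U, rigidStabilizer H U⁆ ≤ N :=
  stmt9_general N g hg U hgU
end

section
/- Let G and T be groups, let T act on ℝ, and let W = C₀(ℝ, G) ⋊ T be the permutational wreath product, where C₀(ℝ, G) is the group of finitely/boundedly supported functions ℝ → G with pointwise multiplication and T acts by (σ(f)h)(s) = h(f⁻¹ s). For g ∈ G let ḡ ∈ C₀(ℝ, G) be the function taking value g on [1/2, 1) and 1 elsewhere. Suppose T contains elements f₁, f₂ with f₁([1/2,1)) = [1/4,1) and f₂([1/2,1)) = [1/4,1/2). Then for every g ∈ G, the element ḡ satisfies ḡ = (f₁ ḡ f₁⁻¹)(f₂ ḡ f₂⁻¹)⁻¹; in particular ḡ lies in the commutator subgroup of the subgroup generated by {ḡ : g ∈ G} and T. -/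
/-- The automorphism of the function group `ℝ → G` induced by `f : T`. -/
noncomputable def wreathAut {G T : Type*} [Group G] [Group T] [MulAction T ℝ] (f : T) :
    MulAut (ℝ → G) where
  toFun h := fun s => h (f⁻¹ • s)
  invFun h := fun s => h (f • s)
  left_inv h := by funext s; simp
  right_inv h := by funext s; simp
  map_mul' h₁ h₂ := rfl

/-- The action of `T` on `ℝ → G` as a homomorphism to automorphisms. -/
noncomputable def wreathAct (G T : Type*) [Group G] [Group T] [MulAction T ℝ] :
    T →* MulAut (ℝ → G) where
  toFun := wreathAut
  map_one' := by
    ext h s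
    simp [wreathAut]
  map_mul' f₁ f₂ := by
    ext h s
    simp [wreathAut, mul_smul]

/-- The function taking value `g` on `[1/2, 1)` and `1` elsewhere. -/
noncomputable def gbar {G : Type*} [Group G] (g : G) : ℝ → G :=
  fun s => if s ∈ Set.Ico (1/2 : ℝ) 1 then g else 1

/-! Conjugating by `f ∈ T` moves the indicator of `g` on `[1/2, 1)` to the indicator of `g` on
`f([1/2, 1))`. As `[1/4, 1)` is the disjoint union of `[1/2, 1)` and `[1/4, 1/2)`, `ḡ` is the
quotient of its conjugates by `f₁` and `f₂`, and `x a x⁻¹ (y a y⁻¹)⁻¹ = ⁅x, a⁆ ⁅a, y⁆`. -/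

theorem gbar_eq_mulIndicator {G : Type*} [Group G] (g : G) :
    gbar g = (Set.Ico (1/2 : ℝ) 1).mulIndicator fun _ => g := by
  funext s
  simp only [gbar, Set.mulIndicator_apply]

section

variable {G T : Type*} [Group G] [Group T] [MulAction T ℝ]

theorem wreathAct_mulIndicator_const (f : T) (S : Set ℝ) (g : G) :
    wreathAct G T f (S.mulIndicator fun _ => g) =
      ((fun s => f • s) '' S).mulIndicator fun _ => g := by
  funext s
  classical
  simp only [wreathAct, wreathAut, MonoidHom.coe_mk, OneHom.coe_mk, MulEquiv.coe_mk,
    Equiv.coe_fn_mk, Set.image_smul, Set.mulIndicator_apply, Set.mem_smul_set_iff_inv_smul_mem]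

theorem gbar_eq_wreathAct_mul_inv_wreathAct {f₁ f₂ : T}
    (h₁ : (fun s => f₁ • s) '' Set.Ico (1/2 : ℝ) 1 = Set.Ico (1/4 : ℝ) 1)
    (h₂ : (fun s => f₂ • s) '' Set.Ico (1/2 : ℝ) 1 = Set.Ico (1/4 : ℝ) (1/2)) (g : G) :
    gbar g = wreathAct G T f₁ (gbar g) * (wreathAct G T f₂ (gbar g))⁻¹ := by
  rw [gbar_eq_mulIndicator, wreathAct_mulIndicator_const, wreathAct_mulIndicator_const, h₁, h₂,
    ← Set.Ico_union_Ico_eq_Ico (by norm_num : (1/4 : ℝ) ≤ 1/2) (by norm_num : (1/2 : ℝ) ≤ 1),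
    Set.union_comm, Set.mulIndicator_union_of_disjoint Set.Ico_disjoint_Ico_same.symm]
  exact (mul_inv_cancel_right _ _).symm

end

open scoped commutatorElement in
theorem mem_commutator_of_eq_conj_mul_inv_conj {W : Type*} [Group W] {H : Subgroup W}
    {a x y : W} (ha : a ∈ H) (hx : x ∈ H) (hy : y ∈ H)
    (h : a = x * a * x⁻¹ * (y * a * y⁻¹)⁻¹) : a ∈ ⁅H, H⁆ := by
  rw [h.trans (by group : x * a * x⁻¹ * (y * a * y⁻¹)⁻¹ = ⁅x, a⁆ * ⁅a, y⁆)]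
  exact mul_mem (Subgroup.commutator_mem_commutator hx ha) (Subgroup.commutator_mem_commutator ha hy)

open SemidirectProduct in
theorem stmt10 {G T : Type*} [Group G] [Group T] [MulAction T ℝ]
    (f₁ f₂ : T)
    (h₁ : (fun s => f₁ • s) '' Set.Ico (1/2 : ℝ) 1 = Set.Ico (1/4 : ℝ) 1)
    (h₂ : (fun s => f₂ • s) '' Set.Ico (1/2 : ℝ) 1 = Set.Ico (1/4 : ℝ) (1/2))
    (g : G) :
    (inl (gbar g) : (ℝ → G) ⋊[wreathAct G T] T) =
      (inr f₁ * inl (gbar g) * (inr f₁)⁻¹) *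
        (inr f₂ * inl (gbar g) * (inr f₂)⁻¹)⁻¹ ∧
    inl (gbar g) ∈
      ⁅Subgroup.closure
          ((Set.range fun g : G => (inl (gbar g) : (ℝ → G) ⋊[wreathAct G T] T)) ∪
            Set.range inr),
        Subgroup.closure
          ((Set.range fun g : G => (inl (gbar g) : (ℝ → G) ⋊[wreathAct G T] T)) ∪
            Set.range inr)⁆ := by
  have heq : (inl (gbar g) : (ℝ → G) ⋊[wreathAct G T] T) =
      (inr f₁ * inl (gbar g) * (inr f₁)⁻¹) * (inr f₂ * inl (gbar g) * (inr f₂)⁻¹)⁻¹ := by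
    rw [← map_inv, ← map_inv, ← inl_aut, ← inl_aut, ← map_inv, ← map_mul,
      ← gbar_eq_wreathAct_mul_inv_wreathAct h₁ h₂]
  refine ⟨heq, mem_commutator_of_eq_conj_mul_inv_conj ?_ ?_ ?_ heq⟩
  · exact Subgroup.subset_closure (Or.inl ⟨g, rfl⟩)
  · exact Subgroup.subset_closure (Or.inr ⟨f₁, rfl⟩)
  · exact Subgroup.subset_closure (Or.inr ⟨f₂, rfl⟩)
end

section
/- The map g ↦ ḡ from G into the permutational wreath product C₀(ℝ, G) ⋊ T is a Frattini embedding: if ḡ and h̄ are conjugate in the wreath product, then g and h are conjugate in G. -/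
/-!
If `c` conjugates `ḡ` to `h̄`, then its left component `a` and right component `f` satisfy
`h̄ s = a s * ḡ (f⁻¹ • s) * (a s)⁻¹` for every `s`. At `s = 1/2` this makes `h` conjugate to
`ḡ (f⁻¹ • 1/2) ∈ {g, 1}`; in the degenerate case `h = 1`, and then `s = f • 1/2` forces `g = 1`.
-/

namespace SemidirectProduct

variable {N H : Type*} [Group N] [Group H] {φ : H →* MulAut N}

theorem left_mul_inl_mul_inv (c : N ⋊[φ] H) (n : N) :
    (c * inl n * c⁻¹).left = c.left * φ c.right n * c.left⁻¹ := by
  rw [mul_left, mul_left, inv_left, mul_right, right_inl, mul_one, ← MulAut.mul_apply,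
    ← map_mul, mul_inv_cancel, map_one, MulAut.one_apply, left_inl]

theorem exists_isConj_of_isConj_inl {n m : N} (hc : IsConj (inl n : N ⋊[φ] H) (inl m)) :
    ∃ t : H, IsConj (φ t n) m := by
  obtain ⟨c, hc⟩ := isConj_iff.mp hc
  refine ⟨c.right, isConj_iff.mpr ⟨c.left, ?_⟩⟩
  rw [← left_mul_inl_mul_inv, hc, left_inl]

end SemidirectProduct

theorem Pi.isConj_apply {ι : Type*} {G : ι → Type*} [∀ i, Group (G i)] {x y : ∀ i, G i}
    (hc : IsConj x y) (i : ι) : IsConj (x i) (y i) := by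
  obtain ⟨c, hc⟩ := isConj_iff.mp hc
  exact isConj_iff.mpr ⟨c i, congrFun hc i⟩

theorem gbar_eq_or_eq_one {G : Type*} [Group G] (g : G) (s : ℝ) :
    gbar g s = g ∨ gbar g s = 1 := by
  unfold gbar
  split_ifs <;> simp

theorem gbar_half {G : Type*} [Group G] (g : G) : gbar g (1 / 2) = g :=
  if_pos ⟨le_rfl, by norm_num⟩

open SemidirectProduct in
theorem stmt12 {G T : Type*} [Group G] [Group T] [MulAction T ℝ] (g h : G)
    (hc : IsConj (inl (gbar g) : (ℝ → G) ⋊[wreathAct G T] T)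
        (inl (gbar h) : (ℝ → G) ⋊[wreathAct G T] T)) :
    IsConj g h := by
  obtain ⟨f, hf⟩ := exists_isConj_of_isConj_inl hc
  have pointwise (s : ℝ) : IsConj (gbar g (f⁻¹ • s)) (gbar h s) :=
    Pi.isConj_apply hf s
  have at_half := pointwise (1 / 2)
  rw [gbar_half] at at_half
  rcases gbar_eq_or_eq_one g (f⁻¹ • (1 / 2)) with hg | hg
  · rwa [hg] at at_half
  · have h_one : h = 1 := isConj_one_right.mp (hg ▸ at_half)
    have at_image := pointwise (f • (1 / 2))
    rw [inv_smul_smul, gbar_half] at at_image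
    have g_one : g = 1 := by
      rcases gbar_eq_or_eq_one h (f • (1 / 2)) with hh | hh
      · exact isConj_one_left.mp (h_one ▸ hh ▸ at_image)
      · exact isConj_one_left.mp (hh ▸ at_image)
    rw [g_one, h_one]
end

section
/- With I_k as above and I_k^r its right half [(2^k-1)/2^k + 1/2^{2k+1}, (2^k-1)/2^k + 1/2^{2k}), and s_n(x) = 2^{-n}x + (1-2^{-n}): for n > 0 and k > n, the image s_{-n}(I_k^r) is contained in the left half I_{k-n}^l of I_{k-n}; in particular s_{-n}(I_k^r) is disjoint from all the right halves I_j^r. -/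
/-!
Writing `a j = 1 - 2⁻ʲ` for the left end of `I_j`, the map `x ↦ 2ⁿ x + (1 - 2ⁿ)` scales distances
to the fixed point `1` by `2ⁿ`, so it sends `a (n + m) + t` to `a m + 2ⁿ t`. Hence it maps
`I_{n+m}^r` onto an interval starting above `a m` of length `2ⁿ / 4ⁿ⁺ᵐ ≤ 1 / 2^(2m+1)`, i.e. into
`I_m^l` as soon as `n ≥ 1`. For disjointness, `I_m^l` and `I_j^r` (with `j ≥ 1`) lie in the
blocks `[a m, a (m+1))` and `[a j, a (j+1))`, which are disjoint unless `m = j`, where the two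
halves of `I_j` are disjoint anyway.
-/

open Set

noncomputable section

namespace ThompsonInterval

def intervalStart (j : ℕ) : ℝ := (2 ^ j - 1) / 2 ^ j

def leftHalf (j : ℕ) : Set ℝ :=
  Ico (intervalStart j) (intervalStart j + 1 / 2 ^ (2 * j + 1))

def rightHalf (j : ℕ) : Set ℝ :=
  Ico (intervalStart j + 1 / 2 ^ (2 * j + 1)) (intervalStart j + 1 / 2 ^ (2 * j))

def dilateAtOne (n : ℕ) (x : ℝ) : ℝ := 2 ^ n * x + (1 - 2 ^ n)

theorem intervalStart_eq (j : ℕ) : intervalStart j = 1 - 1 / 2 ^ j := by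
  unfold intervalStart
  field_simp

theorem intervalStart_strictMono : StrictMono intervalStart := fun i j hij => by
  simp only [intervalStart_eq, sub_lt_sub_iff_left]
  exact one_div_pow_strictAnti one_lt_two hij

theorem dilateAtOne_intervalStart_add (n m : ℕ) (t : ℝ) :
    dilateAtOne n (intervalStart (n + m) + t) = intervalStart m + 2 ^ n * t := by
  simp only [dilateAtOne, intervalStart_eq, pow_add]
  field_simp
  ring

theorem image_dilateAtOne_Ico (n : ℕ) (p q : ℝ) :
    dilateAtOne n '' Ico p q = Ico (dilateAtOne n p) (dilateAtOne n q) :=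
  image_affine_Ico (by positivity) _ _ _

theorem image_rightHalf_subset_leftHalf {n : ℕ} (hn : 0 < n) (m : ℕ) :
    dilateAtOne n '' rightHalf (n + m) ⊆ leftHalf m := by
  rw [rightHalf, image_dilateAtOne_Ico, dilateAtOne_intervalStart_add,
    dilateAtOne_intervalStart_add]
  refine Ico_subset_Ico (le_add_of_nonneg_right (by positivity)) (add_le_add_right ?_ _)
  rw [mul_one_div, div_le_div_iff₀ (by positivity) (by positivity), one_mul, ← pow_add]
  exact pow_le_pow_right₀ one_le_two (by omega)

theorem intervalStart_add_le_succ {j e : ℕ} (h : j + 1 ≤ e) :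
    intervalStart j + 1 / 2 ^ e ≤ intervalStart (j + 1) := by
  have hle : (1 : ℝ) / 2 ^ e ≤ 1 / 2 ^ (j + 1) := one_div_pow_le_one_div_pow_of_le one_le_two h
  have hhalf : (1 : ℝ) / 2 ^ j = 2 * (1 / 2 ^ (j + 1)) := by
    rw [pow_succ]
    field_simp
  rw [intervalStart_eq, intervalStart_eq]
  linarith

theorem leftHalf_subset_Ico (j : ℕ) :
    leftHalf j ⊆ Ico (intervalStart j) (intervalStart (j + 1)) :=
  Ico_subset_Ico le_rfl (intervalStart_add_le_succ (by omega))

theorem rightHalf_subset_Ico {j : ℕ} (hj : 1 ≤ j) :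
    rightHalf j ⊆ Ico (intervalStart j) (intervalStart (j + 1)) :=
  Ico_subset_Ico (le_add_of_nonneg_right (by positivity)) (intervalStart_add_le_succ (by omega))

theorem disjoint_leftHalf_rightHalf (m : ℕ) {j : ℕ} (hj : 1 ≤ j) :
    Disjoint (leftHalf m) (rightHalf j) := by
  rcases eq_or_ne m j with rfl | hmj
  · exact Ico_disjoint_Ico_same
  · exact ((intervalStart_strictMono.monotone.pairwise_disjoint_on_Ico_succ hmj).mono
      (leftHalf_subset_Ico m) (rightHalf_subset_Ico hj))

end ThompsonInterval

end

open ThompsonInterval in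
theorem stmt18 (n k : ℕ) (hn : 0 < n) (hk : n < k) :
    let a : ℕ → ℝ := fun j => (2 ^ j - 1) / 2 ^ j
    let Ir : ℕ → Set ℝ := fun j =>
      Set.Ico (a j + 1 / 2 ^ (2 * j + 1)) (a j + 1 / 2 ^ (2 * j))
    let Il : ℕ → Set ℝ := fun j =>
      Set.Ico (a j) (a j + 1 / 2 ^ (2 * j + 1))
    ((fun x : ℝ => 2 ^ n * x + (1 - 2 ^ n)) '' Ir k ⊆ Il (k - n)) ∧
    (∀ j : ℕ, 1 ≤ j →
      Disjoint ((fun x : ℝ => 2 ^ n * x + (1 - 2 ^ n)) '' Ir k) (Ir j)) := by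
  intro a Ir Il
  obtain ⟨m, rfl⟩ := Nat.exists_eq_add_of_le hk.le
  have hsubset : dilateAtOne n '' rightHalf (n + m) ⊆ leftHalf m :=
    image_rightHalf_subset_leftHalf hn m
  rw [Nat.add_sub_cancel_left]
  exact ⟨hsubset, fun j hj => (disjoint_leftHalf_rightHalf m hj).mono_left hsubset⟩
end
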